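/- Let Q denote the Gaussian tail function Q(x) = ∫_x^∞ (1/√(2π)) e^{-t²/2} dt. Fix K ∈ ℕ, M > 0, σ > 0, and for each k = 0, …, K−1 let r_k ≥ 0, g_k ≥ 0, c_k ≥ 0, P_f^{(k)}(γ) = Q((γ - M σ²)/(σ² √(2M))), and P_m^{(k)}(γ) = 1 - Q((γ - M(σ² + g_k))/(σ √(2M(σ² + 2g_k)))). Let D ⊆ ℝ^K be the feasible set of problem (P2): D = {γ : Σ_{i ∈ S_j} c_i P_m^{(i)}(γ_i) ≤ ε_j for all j = 0, …, J−1, and γ_min,k ≤ γ_k ≤ γ_max,k for all k}, where M σ² ≤ γ_min,k ≤ γ_max,k ≤ M(σ² + g_k) for every k. Then every local minimizer of the objective F(γ) = Σ_{k=0}^{K−1} r_k P_f^{(k)}(γ_k) over D is a global minimizer of F over D. -/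

import Mathlib

/-!
The feasible set is convex and the objective is convex on it, so a local minimizer is global.
Both facts rest on the shape of the Gaussian tail: `Q' = -φ` with `φ` the standard normal
density, which decreases on `[0, ∞)` and increases on `(-∞, 0]`, so `Q` is convex on `[0, ∞)`
and `1 - Q` is convex on `(-∞, 0]`. The thresholds `Mσ² ≤ γ_k ≤ M(σ² + g_k)` put the argument
of `P_f^{(k)}` in the first region and that of `P_m^{(k)}` in the second, so both are convex in
`γ_k` on the box. The constraint functions are then convex, with convex sublevel sets, and `F`
is a nonnegative combination of convex functions.
-/

noncomputable def gaussQ (x : ℝ) : ℝ :=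
  ∫ t in Set.Ioi x, (Real.sqrt (2 * Real.pi))⁻¹ * Real.exp (-t ^ 2 / 2)

open MeasureTheory Set ProbabilityTheory

section ConvexOn

variable {𝕜 E β ι : Type*} [Semiring 𝕜] [PartialOrder 𝕜] [AddCommMonoid E] [SMul 𝕜 E]
  [AddCommMonoid β] [PartialOrder β] [IsOrderedAddMonoid β] [Module 𝕜 β] {s : Set E}

theorem ConvexOn.fun_sum {t : Finset ι} {f : ι → E → β} (hs : Convex 𝕜 s)
    (hf : ∀ i ∈ t, ConvexOn 𝕜 s (f i)) : ConvexOn 𝕜 s (fun x => ∑ i ∈ t, f i x) := by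
  simpa only [Finset.sum_fn] using
    Finset.sum_induction f (ConvexOn 𝕜 s) (fun _ _ => ConvexOn.add) (convexOn_const 0 hs) hf

theorem convex_setOf_forall_le [PosSMulMono 𝕜 β] {f : ι → E → β}
    (hs : Convex 𝕜 s) (hf : ∀ j, ConvexOn 𝕜 s (f j)) (b : ι → β) :
    Convex 𝕜 {x | (∀ j, f j x ≤ b j) ∧ x ∈ s} :=
  fun _ hx _ hy _ _ ha hb hab =>
    ⟨fun j => ((hf j).convex_le (b j) ⟨hx.2, hx.1 j⟩ ⟨hy.2, hy.1 j⟩ ha hb hab).2,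
      hs hx.2 hy.2 ha hb hab⟩

end ConvexOn

theorem ConvexOn.comp_eval {ι : Type*} {s : Set ℝ} {φ : ℝ → ℝ} (hφ : ConvexOn ℝ s φ)
    {B : Set (ι → ℝ)} (hB : Convex ℝ B) (i : ι) (hBs : ∀ γ ∈ B, γ i ∈ s) :
    ConvexOn ℝ B (fun γ => φ (γ i)) :=
  (hφ.comp_linearMap (LinearMap.proj (R := ℝ) (φ := fun _ : ι => ℝ) i)).subset
    (fun γ hγ => hBs γ hγ) hB

theorem ConvexOn.comp_sub_div {s : Set ℝ} {φ : ℝ → ℝ} (hφ : ConvexOn ℝ s φ) (m d : ℝ) :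
    ConvexOn ℝ ((fun x => (x - m) / d) ⁻¹' s) (fun x => φ ((x - m) / d)) := by
  let g : ℝ →ᵃ[ℝ] ℝ :=
    (d⁻¹ • LinearMap.id : ℝ →ₗ[ℝ] ℝ).toAffineMap + AffineMap.const ℝ ℝ (-m / d)
  have hg : ⇑g = fun x => (x - m) / d := by
    ext x
    simp only [g, AffineMap.coe_add, LinearMap.coe_toAffineMap, AffineMap.coe_const,
      Pi.add_apply, LinearMap.smul_apply, LinearMap.id_apply, smul_eq_mul, Function.const_apply]
    ring
  have hcomp := hφ.comp_affineMap g
  rw [hg] at hcomp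
  exact hcomp

theorem convexOn_of_hasDerivAt_of_monotoneOn {D : Set ℝ} (hD : Convex ℝ D) {f f' : ℝ → ℝ}
    (hf : ∀ x, HasDerivAt f (f' x) x) (hf' : MonotoneOn f' (interior D)) :
    ConvexOn ℝ D f := by
  refine MonotoneOn.convexOn_of_deriv hD (fun x _ => (hf x).continuousAt.continuousWithinAt)
    (fun x _ => (hf x).differentiableAt.differentiableWithinAt) ?_
  rwa [show deriv f = f' from funext fun x => (hf x).deriv]

theorem hasDerivAt_integral_Ioi {E : Type*} [NormedAddCommGroup E] [NormedSpace ℝ E]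
    [CompleteSpace E] {f : ℝ → E} (hf : Integrable f) {x : ℝ} (hfx : ContinuousAt f x) :
    HasDerivAt (fun u => ∫ t in Ioi u, f t) (-f x) x := by
  have htail : ∀ u, ∫ t in Ioi u, f t =
      (∫ t, f t) - (∫ t in Iic 0, f t) - ∫ t in (0 : ℝ)..u, f t := by
    intro u
    rw [← intervalIntegral.integral_Iic_sub_Iic hf.integrableOn hf.integrableOn,
      ← intervalIntegral.integral_Iic_add_Ioi hf.integrableOn hf.integrableOn]
    abel
  simp only [htail]
  exact (intervalIntegral.integral_hasDerivAt_right hf.intervalIntegrable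
    hf.aestronglyMeasurable.stronglyMeasurableAtFilter hfx).const_sub _

theorem continuous_gaussianPDFReal (μ : ℝ) (v : NNReal) : Continuous (gaussianPDFReal μ v) := by
  unfold gaussianPDFReal
  fun_prop

theorem gaussianPDFReal_le_of_sq_le (μ : ℝ) (v : NNReal) {x y : ℝ}
    (h : (y - μ) ^ 2 ≤ (x - μ) ^ 2) : gaussianPDFReal μ v x ≤ gaussianPDFReal μ v y := by
  unfold gaussianPDFReal
  gcongr

theorem antitoneOn_gaussianPDFReal (μ : ℝ) (v : NNReal) :
    AntitoneOn (gaussianPDFReal μ v) (Ici μ) :=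
  fun x hx y _ hxy => gaussianPDFReal_le_of_sq_le μ v (by nlinarith [mem_Ici.1 hx])

theorem monotoneOn_gaussianPDFReal (μ : ℝ) (v : NNReal) :
    MonotoneOn (gaussianPDFReal μ v) (Iic μ) :=
  fun x _ y hy hxy => gaussianPDFReal_le_of_sq_le μ v (by nlinarith [mem_Iic.1 hy])

theorem gaussQ_eq_integral_gaussianPDFReal (x : ℝ) :
    gaussQ x = ∫ t in Ioi x, gaussianPDFReal 0 1 t := by
  simp [gaussQ, gaussianPDFReal]

theorem hasDerivAt_gaussQ (x : ℝ) : HasDerivAt gaussQ (-gaussianPDFReal 0 1 x) x := by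
  simpa only [← gaussQ_eq_integral_gaussianPDFReal] using
    hasDerivAt_integral_Ioi (integrable_gaussianPDFReal 0 1)
      (continuous_gaussianPDFReal 0 1).continuousAt

theorem convexOn_gaussQ : ConvexOn ℝ (Ici 0) gaussQ :=
  convexOn_of_hasDerivAt_of_monotoneOn (convex_Ici 0) hasDerivAt_gaussQ
    ((antitoneOn_gaussianPDFReal 0 1).neg.mono interior_subset)

theorem convexOn_one_sub_gaussQ : ConvexOn ℝ (Iic 0) (fun x => 1 - gaussQ x) :=
  convexOn_of_hasDerivAt_of_monotoneOn (convex_Iic 0)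
    (fun x => by simpa using (hasDerivAt_gaussQ x).const_sub 1)
    ((monotoneOn_gaussianPDFReal 0 1).mono interior_subset)

noncomputable def falseAlarmProb (M σ γ : ℝ) : ℝ :=
  gaussQ ((γ - M * σ ^ 2) / (σ ^ 2 * √(2 * M)))

noncomputable def missProb (M σ g γ : ℝ) : ℝ :=
  1 - gaussQ ((γ - M * (σ ^ 2 + g)) / (σ * √(2 * M * (σ ^ 2 + 2 * g))))

theorem convexOn_falseAlarmProb (M σ : ℝ) :
    ConvexOn ℝ (Ici (M * σ ^ 2)) (falseAlarmProb M σ) :=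
  (convexOn_gaussQ.comp_sub_div _ _).subset
    (fun _ hγ => div_nonneg (sub_nonneg.2 hγ) (by positivity : (0 : ℝ) ≤ σ ^ 2 * √(2 * M)))
    (convex_Ici _)

theorem convexOn_missProb (M g : ℝ) {σ : ℝ} (hσ : 0 ≤ σ) :
    ConvexOn ℝ (Iic (M * (σ ^ 2 + g))) (missProb M σ g) :=
  (convexOn_one_sub_gaussQ.comp_sub_div _ _).subset
    (fun _ hγ => div_nonpos_of_nonpos_of_nonneg (sub_nonpos.2 hγ)
      (by positivity : (0 : ℝ) ≤ σ * √(2 * M * (σ ^ 2 + 2 * g))))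
    (convex_Iic _)

theorem P2_local_min_is_global_general (K J : ℕ) (M σ : ℝ) (hσ : 0 < σ)
    (r g c : Fin K → ℝ) (hr : ∀ k, 0 ≤ r k) (hc : ∀ k, 0 ≤ c k)
    (S : Fin J → Finset (Fin K)) (ε : Fin J → ℝ)
    (γmin γmax : Fin K → ℝ)
    (hbounds : ∀ k, M * σ ^ 2 ≤ γmin k ∧ γmin k ≤ γmax k ∧
      γmax k ≤ M * (σ ^ 2 + g k))
    (D : Set (Fin K → ℝ))
    (hD : D =
      {γ : Fin K → ℝ |
        (∀ j : Fin J,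
          ∑ i ∈ S j,
            c i * (1 - gaussQ ((γ i - M * (σ ^ 2 + g i)) /
              (σ * Real.sqrt (2 * M * (σ ^ 2 + 2 * g i))))) ≤ ε j) ∧
        (∀ k : Fin K, γmin k ≤ γ k ∧ γ k ≤ γmax k)})
    (F : (Fin K → ℝ) → ℝ)
    (hF : ∀ γ, F γ =
      ∑ k : Fin K, r k * gaussQ ((γ k - M * σ ^ 2) / (σ ^ 2 * Real.sqrt (2 * M)))) :
    ∀ x ∈ D, IsLocalMinOn F D x → ∀ y ∈ D, F x ≤ F y := by
  have hD' : D = {γ | (∀ j, ∑ i ∈ S j, c i * missProb M σ (g i) (γ i) ≤ ε j) ∧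
      γ ∈ Icc γmin γmax} := by
    simp only [hD, mem_Icc, Pi.le_def, ← forall_and, missProb]
  have hconstr : ∀ j, ConvexOn ℝ (Icc γmin γmax)
      fun γ => ∑ i ∈ S j, c i * missProb M σ (g i) (γ i) :=
    fun j => ConvexOn.fun_sum (convex_Icc _ _) fun i _ =>
      ((convexOn_missProb M (g i) hσ.le).comp_eval (convex_Icc _ _) i
        fun _ hγ => (hγ.2 i).trans (hbounds i).2.2).smul (hc i)
  have hDconv : Convex ℝ D := hD' ▸ convex_setOf_forall_le (convex_Icc _ _) hconstr ε
  have hFconv : ConvexOn ℝ D F := by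
    rw [show F = fun γ => ∑ k, r k * falseAlarmProb M σ (γ k) from funext hF]
    refine ConvexOn.fun_sum hDconv fun k _ =>
      ((convexOn_falseAlarmProb M σ).comp_eval hDconv k fun γ hγ => ?_).smul (hr k)
    rw [hD'] at hγ
    exact (hbounds k).1.trans (hγ.2.1 k)
  exact fun x hx hloc y hy => IsMinOn.of_isLocalMinOn_of_convexOn hx hloc hFconv hy

/-- on the feasible set `D` of problem (P2), every local minimizer of the
objective `F(γ) = Σ_k r_k P_f^{(k)}(γ_k)` is a global minimizer of `F` over `D`. -/
theorem P2_local_min_is_global (K J : ℕ) (M σ : ℝ) (hM : 0 < M) (hσ : 0 < σ)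
    (r g c : Fin K → ℝ) (hr : ∀ k, 0 ≤ r k) (hg : ∀ k, 0 ≤ g k) (hc : ∀ k, 0 ≤ c k)
    (S : Fin J → Finset (Fin K)) (ε : Fin J → ℝ) (hε : ∀ j, 0 ≤ ε j)
    (γmin γmax : Fin K → ℝ)
    (hbounds : ∀ k, M * σ ^ 2 ≤ γmin k ∧ γmin k ≤ γmax k ∧
      γmax k ≤ M * (σ ^ 2 + g k))
    (D : Set (Fin K → ℝ))
    (hD : D =
      {γ : Fin K → ℝ |
        (∀ j : Fin J,
          ∑ i ∈ S j,
            c i * (1 - gaussQ ((γ i - M * (σ ^ 2 + g i)) /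
              (σ * Real.sqrt (2 * M * (σ ^ 2 + 2 * g i))))) ≤ ε j) ∧
        (∀ k : Fin K, γmin k ≤ γ k ∧ γ k ≤ γmax k)})
    (F : (Fin K → ℝ) → ℝ)
    (hF : ∀ γ, F γ =
      ∑ k : Fin K, r k * gaussQ ((γ k - M * σ ^ 2) / (σ ^ 2 * Real.sqrt (2 * M)))) :
    ∀ x ∈ D, IsLocalMinOn F D x → ∀ y ∈ D, F x ≤ F y :=
  P2_local_min_is_global_general K J M σ hσ r g c hr hc S ε γmin γmax hbounds D hD F hF
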